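/- If k ⊆ k' ⊆ A where k' is a field and A is a commutative finite k-algebra that is tame over k, then A is tame over k'. -/

import Mathlib

/-!
The trace of a nilpotent element is nilpotent, hence zero over a reduced base, so the nilradical
always lies in the radical of the trace form. Conversely, transitivity of the trace,
`Tr_{A/k} = Tr_{k'/k} ∘ Tr_{A/k'}`, shows that the radical of the trace form over `k'` lies in
the one over `k`, which is the nilradical by tameness.
-/

open Algebra

def traceRadical (R S : Type*) [CommRing R] [CommRing S] [Algebra R S] : Set S :=
  {x | ∀ y, trace R S (x * y) = 0}

theorem nilradical_subset_traceRadical (R S : Type*) [CommRing R] [IsReduced R] [CommRing S]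
    [Algebra R S] : (nilradical S : Set S) ⊆ traceRadical R S := fun x hx y ↦
  (isNilpotent_trace_of_isNilpotent
    ((Commute.all x y).isNilpotent_mul_right (mem_nilradical.mp hx))).eq_zero

theorem traceRadical_subset_traceRadical_of_isScalarTower (k k' A : Type*) [Field k] [Field k']
    [CommRing A] [Algebra k k'] [Algebra k' A] [Algebra k A] [IsScalarTower k k' A]
    [FiniteDimensional k A] : traceRadical k' A ⊆ traceRadical k A := by
  intro x hx y
  rcases subsingleton_or_nontrivial A with _ | _
  · simp [Subsingleton.elim (x * y) 0]
  · have : FiniteDimensional k' A := Module.Finite.right k k' A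
    have : FiniteDimensional k k' := Module.Finite.left k k' A
    rw [← trace_trace (S := k'), hx y, map_zero]

/-- If `k ⊆ k' ⊆ A` with `k'` a field and `A` a commutative finite `k`-algebra that is
tame over `k` (radical of the trace form = nilradical), then `A` is tame over `k'`. -/
theorem tame_over_intermediate_field (k k' A : Type*) [Field k] [Field k'] [CommRing A]
    [Algebra k k'] [Algebra k' A] [Algebra k A] [IsScalarTower k k' A]
    [FiniteDimensional k A]
    (htame : {x : A | ∀ y : A, Algebra.trace k A (x * y) = 0} = (nilradical A : Set A)) :
    {x : A | ∀ y : A, Algebra.trace k' A (x * y) = 0} = (nilradical A : Set A) := by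
  change traceRadical k A = _ at htame
  change traceRadical k' A = _
  refine subset_antisymm ?_ (nilradical_subset_traceRadical k' A)
  calc traceRadical k' A ⊆ traceRadical k A :=
        traceRadical_subset_traceRadical_of_isScalarTower k k' A
    _ = nilradical A := htame
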